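/- With γ⁽ᵏ⁾ ∈ 𝔽₂[x] defined by γ⁽⁰⁾ = 0, γ⁽¹⁾ = 1, γ⁽ᵏ⁾ = x·γ⁽ᵏ⁻¹⁾ + γ⁽ᵏ⁻²⁾, we have γ^(2^k − 1) = ∑_{j=1}^{k} x^(2^k − 2^j) for all k ≥ 1 (and γ^(2^0 − 1) = γ⁽⁰⁾ = 0). -/

import Mathlib

/-!
The `gam n` are Fibonacci polynomials, so they satisfy the addition formula
`gam (m + n + 1) = gam (m + 1) * gam (n + 1) + gam m * gam n`. In characteristic two it yields the
doubling formulas `gam (2 * n) = X * gam n ^ 2` and `gam (2 * n + 1) = gam (n + 1) ^ 2 + gam n ^ 2`.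
The first gives `gam (2 ^ k) = X ^ (2 ^ k - 1)`; the second, applied to `2 ^ (k + 1) - 1`, gives
`gam (2 ^ (k + 1) - 1) = X ^ (2 ^ (k + 1) - 2) + gam (2 ^ k - 1) ^ 2`, and squaring is additive,
so induction on `k` finishes.
-/

open Polynomial

noncomputable def gam : ℕ → Polynomial (ZMod 2)
  | 0 => 0
  | 1 => 1
  | (k + 2) => Polynomial.X * gam (k + 1) + gam k

lemma gam_add_two (n : ℕ) : gam (n + 2) = X * gam (n + 1) + gam n := rfl

lemma gam_add (m n : ℕ) :
    gam (m + n + 1) = gam (m + 1) * gam (n + 1) + gam m * gam n := by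
  induction n using Nat.twoStepInduction with
  | zero => simp [gam]
  | one => simp [gam]; ring
  | more n ih ih' =>
    rw [show m + (n + 2) + 1 = m + n + 1 + 2 by omega, gam_add_two,
      show m + n + 1 + 1 = m + (n + 1) + 1 by omega, ih', ih,
      show n + 2 + 1 = n + 1 + 2 by omega, show n + 1 + 1 = n + 2 from rfl,
      gam_add_two (n + 1), gam_add_two n]
    ring

lemma gam_two_mul (n : ℕ) : gam (2 * n) = X * gam n ^ 2 := by
  cases n with
  | zero => simp [gam]
  | succ n =>
    rw [show 2 * (n + 1) = n + 1 + n + 1 by omega, gam_add, gam_add_two]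
    linear_combination CharTwo.add_self_eq_zero (gam n * gam (n + 1))

lemma gam_two_mul_add_one (n : ℕ) : gam (2 * n + 1) = gam (n + 1) ^ 2 + gam n ^ 2 := by
  rw [two_mul, gam_add]
  ring

lemma gam_two_pow (k : ℕ) : gam (2 ^ k) = X ^ (2 ^ k - 1) := by
  induction k with
  | zero => simp [gam]
  | succ k ih =>
    rw [pow_succ', gam_two_mul, ih, ← pow_mul, ← pow_succ']
    congr 1
    have := Nat.one_le_two_pow (n := k)
    omega

lemma sum_Icc_one_eq_sum_range {M : Type*} [AddCommMonoid M] (f : ℕ → M) (k : ℕ) :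
    ∑ j ∈ Finset.Icc 1 k, f j = ∑ i ∈ Finset.range k, f (i + 1) := by
  induction k with
  | zero => simp
  | succ k ih => rw [Finset.sum_Icc_succ_top (by omega), ih, Finset.sum_range_succ]

lemma pow_two_pow_sub_two_pow_sq {M : Type*} [Monoid M] (a : M) {j k : ℕ} (hjk : j ≤ k) :
    (a ^ (2 ^ k - 2 ^ j)) ^ 2 = a ^ (2 ^ (k + 1) - 2 ^ (j + 1)) := by
  have := Nat.pow_le_pow_right two_pos hjk
  rw [← pow_mul, pow_succ 2 k, pow_succ 2 j]
  congr 1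
  omega

theorem gam_two_pow_sub_one_general (k : ℕ) :
    gam (2 ^ k - 1) = ∑ j ∈ Finset.Icc 1 k, Polynomial.X ^ (2 ^ k - 2 ^ j) := by
  rw [sum_Icc_one_eq_sum_range]
  induction k with
  | zero => simp [gam]
  | succ k ih =>
    have h2k : 1 ≤ 2 ^ k := Nat.one_le_two_pow
    rw [show 2 ^ (k + 1) - 1 = 2 * (2 ^ k - 1) + 1 by omega, gam_two_mul_add_one,
      Nat.sub_add_cancel h2k, gam_two_pow, ih, CharTwo.sum_sq, Finset.sum_range_succ', add_comm]
    congr 1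
    · exact Finset.sum_congr rfl fun i hi ↦ pow_two_pow_sub_two_pow_sq X (Finset.mem_range.mp hi)
    · simpa using pow_two_pow_sub_two_pow_sq (X : (ZMod 2)[X]) k.zero_le

theorem gam_two_pow_sub_one (k : ℕ) (hk : 1 ≤ k) :
    gam (2 ^ k - 1) = ∑ j ∈ Finset.Icc 1 k, Polynomial.X ^ (2 ^ k - 2 ^ j) :=
  gam_two_pow_sub_one_general k
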